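/- arXiv:1710.06751 — 5 statements merged into one kernel-verified Lean document; each statement's English description precedes it below -/
import Mathlib

section
/- Let p > 2. There exists a constant C > 0 depending only on p such that for every non-decreasing g : [0,1] → ℝ with ∫₀¹ |g(u)|^p du < ∞ and every h ∈ (0,1), ∫₀^{1−h} (g(u+h) − g(u))² du ≤ C · (∫₀¹ |g(u)|^p du)^{2/p} · h^{(p−2)/p}. -/
/-!
Write `D u = g (u + h) - g u`, which is nonnegative since `g` is monotone. Its integral
telescopes to `∫_{1-h}^1 g - ∫_0^h g`, and Hölder on these two intervals of length `h` bounds it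
by `2 ‖g‖_p h^{1-1/p}`; on the other hand `∫ D^p ≤ 2^p ‖g‖_p^p`. Since
`D^2 = D^{(p-2)/(p-1)} (D^p)^{1/(p-1)}`, Hölder's inequality interpolates `∫ D^2` between these
two moments, and the exponents combine to `4 ‖g‖_p^2 h^{(p-2)/p}`.
-/

open MeasureTheory Set

section Holder

variable {α : Type*} [MeasurableSpace α] {μ : Measure α}

theorem integral_rpow_mul_rpow_le_of_add_eq_one {f g : α → ℝ} (hf : 0 ≤ᵐ[μ] f)
    (hg : 0 ≤ᵐ[μ] g) (hfi : Integrable f μ) (hgi : Integrable g μ) {p q : ℝ} (hp : 0 ≤ p)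
    (hq : 0 ≤ q) (hpq : p + q = 1) :
    ∫ x, f x ^ p * g x ^ q ∂μ ≤ (∫ x, f x ∂μ) ^ p * (∫ x, g x ∂μ) ^ q := by
  have hfgp : 0 ≤ᵐ[μ] fun x => f x ^ p * g x ^ q := by
    filter_upwards [hf, hg] with x hfx hgx
    exact mul_nonneg (Real.rpow_nonneg hfx p) (Real.rpow_nonneg hgx q)
  have hofReal : (fun x => ENNReal.ofReal (f x ^ p * g x ^ q)) =ᵐ[μ]
      fun x => ENNReal.ofReal (f x) ^ p * ENNReal.ofReal (g x) ^ q := by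
    filter_upwards [hf, hg] with x hfx hgx
    rw [ENNReal.ofReal_mul (Real.rpow_nonneg hfx p), ENNReal.ofReal_rpow_of_nonneg hfx hp,
      ENNReal.ofReal_rpow_of_nonneg hgx hq]
  rw [integral_eq_lintegral_of_nonneg_ae hf hfi.aestronglyMeasurable,
    integral_eq_lintegral_of_nonneg_ae hg hgi.aestronglyMeasurable,
    integral_eq_lintegral_of_nonneg_ae hfgp
      ((hfi.aemeasurable.pow_const p).mul (hgi.aemeasurable.pow_const q)).aestronglyMeasurable,
    lintegral_congr_ae hofReal, ENNReal.toReal_rpow, ENNReal.toReal_rpow,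
    ← ENNReal.toReal_mul]
  refine ENNReal.toReal_mono ?_ (ENNReal.lintegral_mul_norm_pow_le
    hfi.aemeasurable.ennreal_ofReal hgi.aemeasurable.ennreal_ofReal hp hq hpq)
  exact ENNReal.mul_ne_top (ENNReal.rpow_ne_top_of_nonneg hp hfi.lintegral_lt_top.ne)
    (ENNReal.rpow_ne_top_of_nonneg hq hgi.lintegral_lt_top.ne)

theorem setIntegral_abs_le_rpow_mul_measureReal {f : α → ℝ} {p : ℝ} (hp : 1 ≤ p)
    {s t : Set α} (hst : s ⊆ t) (hs : μ s ≠ ⊤)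
    (hf : IntegrableOn (fun x => |f x| ^ p) t μ) :
    ∫ x in s, |f x| ∂μ ≤
      (∫ x in t, |f x| ^ p ∂μ) ^ (1 / p) * μ.real s ^ (1 - 1 / p) := by
  have : IsFiniteMeasure (μ.restrict s) := isFiniteMeasure_restrict.2 hs
  have hp0 : p ≠ 0 := by positivity
  calc ∫ x in s, |f x| ∂μ = ∫ x in s, (|f x| ^ p) ^ (1 / p) * 1 ^ (1 - 1 / p) ∂μ := by
        congr 1 with x
        rw [Real.one_rpow, mul_one, ← Real.rpow_mul (abs_nonneg _), mul_one_div_cancel hp0,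
          Real.rpow_one]
    _ ≤ (∫ x in s, |f x| ^ p ∂μ) ^ (1 / p) * (∫ _ in s, (1 : ℝ) ∂μ) ^ (1 - 1 / p) :=
        integral_rpow_mul_rpow_le_of_add_eq_one (ae_of_all _ fun x => by positivity)
          (ae_of_all _ fun _ => zero_le_one) (hf.mono_set hst) (integrable_const 1)
          (by positivity) (by rw [sub_nonneg]; exact div_le_one_of_le₀ hp (by positivity))
          (by ring)
    _ ≤ (∫ x in t, |f x| ^ p ∂μ) ^ (1 / p) * μ.real s ^ (1 - 1 / p) := by
        rw [setIntegral_const, smul_eq_mul, mul_one]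
        gcongr
        exact ae_of_all _ fun x => by positivity

theorem integral_sq_le_integral_abs_rpow_mul {f : α → ℝ} {p : ℝ} (hp : 2 < p)
    (hf : Integrable f μ) (hfp : Integrable (fun x => |f x| ^ p) μ) :
    ∫ x, f x ^ 2 ∂μ ≤
      (∫ x, |f x| ∂μ) ^ ((p - 2) / (p - 1)) * (∫ x, |f x| ^ p ∂μ) ^ (1 / (p - 1)) := by
  have hp1 : p - 1 ≠ 0 := by linarith
  have hexp : (p - 2) / (p - 1) + p * (1 / (p - 1)) = 2 := by field_simp; ring
  calc ∫ x, f x ^ 2 ∂μ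
      = ∫ x, |f x| ^ ((p - 2) / (p - 1)) * (|f x| ^ p) ^ (1 / (p - 1)) ∂μ := by
        congr 1 with x
        rw [← Real.rpow_mul (abs_nonneg _),
          ← Real.rpow_add' (abs_nonneg _) (by rw [hexp]; norm_num), hexp, Real.rpow_two, sq_abs]
    _ ≤ _ := integral_rpow_mul_rpow_le_of_add_eq_one (ae_of_all _ fun x => abs_nonneg _)
        (ae_of_all _ fun x => by positivity) hf.abs hfp
        (div_nonneg (by linarith) (by linarith)) (div_nonneg zero_le_one (by linarith))
        (by field_simp; ring)

theorem integrable_of_integrable_abs_rpow [IsFiniteMeasure μ] {f : α → ℝ} {p : ℝ}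
    (hp : 1 ≤ p) (hf : AEStronglyMeasurable f μ) (hfp : Integrable (fun x => |f x| ^ p) μ) :
    Integrable f μ := by
  have := integrable_norm_rpow_of_le hf zero_le_one (by linarith) hp hfp
  simpa only [Real.rpow_one, integrable_norm_iff hf] using this

end Holder

theorem Real.abs_sub_rpow_le {p : ℝ} (hp : 1 ≤ p) (a b : ℝ) :
    |a - b| ^ p ≤ 2 ^ (p - 1) * (|a| ^ p + |b| ^ p) := by
  calc |a - b| ^ p ≤ (|a| + |b|) ^ p := by gcongr; exact abs_sub _ _
    _ ≤ 2 ^ (p - 1) * (|a| ^ p + |b| ^ p) := by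
      lift |a| to NNReal using abs_nonneg a with x
      lift |b| to NNReal using abs_nonneg b with y
      exact_mod_cast NNReal.rpow_add_le_mul_rpow_add_rpow x y hp

section Shift

variable {f : ℝ → ℝ} {a b c : ℝ}

theorem MeasureTheory.IntegrableOn.comp_add_right_Ioo (hf : IntegrableOn f (Ioo a b))
    (hc : 0 ≤ c) :
    IntegrableOn (fun x => f (x + c)) (Ioo a (b - c)) := by
  have hf' : IntegrableOn f ((· + c) '' Ioo a (b - c)) := by
    rw [image_add_const_Ioo, sub_add_cancel]
    exact hf.mono_set (Ioo_subset_Ioo_left (by linarith))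
  exact ((measurePreserving_add_right volume c).integrableOn_image
    (measurableEmbedding_addRight c)).1 hf'

theorem setIntegral_Ioo_comp_add_right (f : ℝ → ℝ) (a b c : ℝ) :
    ∫ x in Ioo a b, f (x + c) = ∫ x in Ioo (a + c) (b + c), f x := by
  rw [← image_add_const_Ioo]
  exact ((measurePreserving_add_right volume c).setIntegral_image_emb
    (measurableEmbedding_addRight c) f _).symm

theorem setIntegral_Ioo_sub_comp_add (hf : IntegrableOn f (Ioo a b)) (hc : 0 ≤ c)
    (hcab : c ≤ b - a) :
    ∫ u in Ioo a (b - c), (f (u + c) - f u) =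
      (∫ u in Ioo (b - c) b, f u) - ∫ u in Ioo a (a + c), f u := by
  have hii : ∀ x ∈ Icc a b, ∀ y ∈ Icc a b, IntervalIntegrable f volume x y :=
    fun x hx y hy =>
    (((integrableOn_Icc_iff_integrableOn_Ioo).2 hf).mono_set
      (uIcc_subset_Icc hx hy)).intervalIntegrable
  have hIoo : ∀ (F : ℝ → ℝ) {x y : ℝ}, x ≤ y →
      ∫ u in Ioo x y, F u = ∫ u in x..y, F u :=
    fun F x y hxy => by rw [intervalIntegral.integral_of_le hxy, integral_Ioc_eq_integral_Ioo]
  have ha : a ∈ Icc a b := ⟨le_rfl, by linarith⟩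
  have hb : b ∈ Icc a b := ⟨by linarith, le_rfl⟩
  have hac : a + c ∈ Icc a b := ⟨by linarith, by linarith⟩
  have hbc : b - c ∈ Icc a b := ⟨by linarith, by linarith⟩
  have hshift : IntervalIntegrable (fun u => f (u + c)) volume a (b - c) := by
    simpa using (hii _ hac _ hb).comp_add_right c
  rw [hIoo _ (by linarith), hIoo _ (by linarith), hIoo _ (by linarith),
    intervalIntegral.integral_sub hshift (hii _ ha _ hbc),
    intervalIntegral.integral_comp_add_right, sub_add_cancel,
    intervalIntegral.integral_interval_sub_interval_comm' (hii _ hac _ hb) (hii _ ha _ hbc)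
      (hii _ hac _ ha)]

end Shift

section UnitInterval

variable {g : ℝ → ℝ} {p h : ℝ}

theorem integrableOn_abs_sub_comp_add_rpow (hp : 1 ≤ p)
    (hgp : IntegrableOn (fun u => |g u| ^ p) (Ioo 0 1)) (h0 : 0 ≤ h)
    (hD : AEStronglyMeasurable (fun u => g (u + h) - g u) (volume.restrict (Ioo 0 (1 - h)))) :
    IntegrableOn (fun u => |g (u + h) - g u| ^ p) (Ioo 0 (1 - h)) := by
  refine (((hgp.comp_add_right_Ioo h0).add
    (hgp.mono_set (Ioo_subset_Ioo le_rfl (by linarith)))).const_mul (2 ^ (p - 1))).mono'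
    (hD.aemeasurable.norm.pow_const p).aestronglyMeasurable (ae_of_all _ fun u => ?_)
  rw [Real.norm_eq_abs, abs_of_nonneg (by positivity)]
  exact Real.abs_sub_rpow_le hp _ _

theorem integral_abs_sub_comp_add_rpow_le (hp : 1 ≤ p)
    (hgp : IntegrableOn (fun u => |g u| ^ p) (Ioo 0 1)) (h0 : 0 ≤ h) :
    ∫ u in Ioo 0 (1 - h), |g (u + h) - g u| ^ p ≤ 2 ^ p * ∫ u in Ioo 0 1, |g u| ^ p := by
  have hsub : Ioo 0 (1 - h) ⊆ Ioo (0 : ℝ) 1 := Ioo_subset_Ioo le_rfl (by linarith)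
  have hshift : ∫ u in Ioo 0 (1 - h), |g (u + h)| ^ p ≤ ∫ u in Ioo 0 1, |g u| ^ p := by
    rw [setIntegral_Ioo_comp_add_right (fun u => |g u| ^ p)]
    exact setIntegral_mono_set hgp (ae_of_all _ fun u => by positivity)
      (Ioo_subset_Ioo (by linarith) (by linarith)).eventuallyLE
  have hrest : ∫ u in Ioo 0 (1 - h), |g u| ^ p ≤ ∫ u in Ioo 0 1, |g u| ^ p :=
    setIntegral_mono_set hgp (ae_of_all _ fun u => by positivity) hsub.eventuallyLE
  calc ∫ u in Ioo 0 (1 - h), |g (u + h) - g u| ^ p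
      ≤ ∫ u in Ioo 0 (1 - h), 2 ^ (p - 1) * (|g (u + h)| ^ p + |g u| ^ p) :=
        integral_mono_of_nonneg (ae_of_all _ fun u => by positivity)
          (((hgp.comp_add_right_Ioo h0).add (hgp.mono_set hsub)).const_mul _)
          (ae_of_all _ fun u => Real.abs_sub_rpow_le hp _ _)
    _ = 2 ^ (p - 1) *
          ((∫ u in Ioo 0 (1 - h), |g (u + h)| ^ p) + ∫ u in Ioo 0 (1 - h), |g u| ^ p) := by
        rw [integral_const_mul, integral_add (hgp.comp_add_right_Ioo h0) (hgp.mono_set hsub)]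
    _ ≤ 2 ^ (p - 1) * ((∫ u in Ioo 0 1, |g u| ^ p) + ∫ u in Ioo 0 1, |g u| ^ p) := by gcongr
    _ = 2 ^ p * ∫ u in Ioo 0 1, |g u| ^ p := by rw [Real.rpow_sub_one two_ne_zero]; ring

theorem MonotoneOn.integral_abs_sub_comp_add_le (hg : MonotoneOn g (Icc 0 1)) (hp : 1 ≤ p)
    (hgi : IntegrableOn g (Ioo 0 1)) (hgp : IntegrableOn (fun u => |g u| ^ p) (Ioo 0 1))
    (h0 : 0 ≤ h) (h1 : h ≤ 1) :
    ∫ u in Ioo 0 (1 - h), |g (u + h) - g u| ≤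
      2 * (∫ u in Ioo 0 1, |g u| ^ p) ^ (1 / p) * h ^ (1 - 1 / p) := by
  have hedge : ∀ a b : ℝ, b - a = h → Ioo a b ⊆ Ioo 0 1 →
      ∫ u in Ioo a b, |g u| ≤ (∫ u in Ioo 0 1, |g u| ^ p) ^ (1 / p) * h ^ (1 - 1 / p) :=
    fun a b hab hsub => by
      simpa only [Real.volume_real_Ioo, hab, max_eq_left h0] using
        setIntegral_abs_le_rpow_mul_measureReal hp hsub measure_Ioo_lt_top.ne hgp
  rw [setIntegral_congr_fun measurableSet_Ioo fun u hu => abs_of_nonneg (sub_nonneg.2 (hg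
    ⟨hu.1.le, by linarith [hu.2]⟩ ⟨by linarith [hu.1], by linarith [hu.2]⟩ (by linarith))),
    setIntegral_Ioo_sub_comp_add hgi h0 (by linarith), zero_add]
  calc _ ≤ |∫ u in Ioo (1 - h) 1, g u| + |∫ u in Ioo 0 h, g u| :=
        (le_abs_self _).trans (abs_sub _ _)
    _ ≤ (∫ u in Ioo (1 - h) 1, |g u|) + ∫ u in Ioo 0 h, |g u| :=
        add_le_add abs_integral_le_integral_abs abs_integral_le_integral_abs
    _ ≤ _ := by
        linarith [hedge (1 - h) 1 (by ring) (Ioo_subset_Ioo (by linarith) le_rfl),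
          hedge 0 h (by ring) (Ioo_subset_Ioo le_rfl h1)]

end UnitInterval

theorem Real.mul_rpow_mul_rpow_eq_sq_mul_rpow {p c t : ℝ} (hp : 2 < p) (hc : 0 ≤ c)
    (ht : 0 ≤ t) :
    (c * t ^ (1 - 1 / p)) ^ ((p - 2) / (p - 1)) * (c ^ p) ^ (1 / (p - 1)) =
      c ^ 2 * t ^ ((p - 2) / p) := by
  have hp0 : p ≠ 0 := by linarith
  have hp1 : p - 1 ≠ 0 := by linarith
  have hc_exp : (p - 2) / (p - 1) + p * (1 / (p - 1)) = 2 := by field_simp; ring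
  have ht_exp : (1 - 1 / p) * ((p - 2) / (p - 1)) = (p - 2) / p := by field_simp
  rw [Real.mul_rpow hc (Real.rpow_nonneg ht _), ← Real.rpow_mul ht, ← Real.rpow_mul hc,
    mul_right_comm, ← Real.rpow_add' hc (by rw [hc_exp]; norm_num), hc_exp, ht_exp,
    Real.rpow_two]

/-- Let `p > 2`. There exists a constant `C > 0` depending only on `p`
such that for every non-decreasing `g : [0,1] → ℝ` with `∫₀¹ |g(u)|^p du < ∞` and every
`h ∈ (0,1)`, `∫₀^{1−h} (g(u+h) − g(u))² du ≤ C · (∫₀¹ |g(u)|^p du)^{2/p} · h^{(p−2)/p}`. -/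
theorem stmt1 (p : ℝ) (hp : 2 < p) :
    ∃ C : ℝ, 0 < C ∧
      ∀ g : ℝ → ℝ, MonotoneOn g (Set.Icc 0 1) →
        IntegrableOn (fun u => |g u| ^ p) (Set.Ioo 0 1) →
        ∀ h : ℝ, 0 < h → h < 1 →
          ∫ u in Set.Ioo (0:ℝ) (1 - h), (g (u + h) - g u) ^ 2 ≤
            C * (∫ u in Set.Ioo (0:ℝ) 1, |g u| ^ p) ^ (2/p) * h ^ ((p - 2)/p) := by
  refine ⟨4, by norm_num, fun g hg hgp h h0 h1 => ?_⟩
  have hp1 : 1 ≤ p := by linarith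
  set I := ∫ u in Ioo (0 : ℝ) 1, |g u| ^ p
  have hI : 0 ≤ I := setIntegral_nonneg measurableSet_Ioo fun u _ => by positivity
  have hgi : IntegrableOn g (Ioo 0 1) := integrable_of_integrable_abs_rpow hp1
    (aemeasurable_restrict_of_monotoneOn measurableSet_Ioo
      (hg.mono Ioo_subset_Icc_self)).aestronglyMeasurable hgp
  have hDi : IntegrableOn (fun u => g (u + h) - g u) (Ioo 0 (1 - h)) :=
    (hgi.comp_add_right_Ioo h0.le).sub (hgi.mono_set (Ioo_subset_Ioo le_rfl (by linarith)))
  have hpow : 2 ^ p * I = (2 * I ^ (1 / p)) ^ p := by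
    rw [Real.mul_rpow zero_le_two (by positivity), ← Real.rpow_mul hI,
      one_div_mul_cancel (by positivity), Real.rpow_one]
  calc ∫ u in Ioo 0 (1 - h), (g (u + h) - g u) ^ 2
      ≤ (∫ u in Ioo 0 (1 - h), |g (u + h) - g u|) ^ ((p - 2) / (p - 1)) *
          (∫ u in Ioo 0 (1 - h), |g (u + h) - g u| ^ p) ^ (1 / (p - 1)) :=
        integral_sq_le_integral_abs_rpow_mul hp hDi
          (integrableOn_abs_sub_comp_add_rpow hp1 hgp h0.le hDi.aestronglyMeasurable)
    _ ≤ (2 * I ^ (1 / p) * h ^ (1 - 1 / p)) ^ ((p - 2) / (p - 1)) *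
          ((2 * I ^ (1 / p)) ^ p) ^ (1 / (p - 1)) := by
        rw [← hpow]
        gcongr
        · exact hg.integral_abs_sub_comp_add_le hp1 hgi hgp h0.le h1.le
        · exact integral_abs_sub_comp_add_rpow_le hp1 hgp h0.le
    _ = (2 * I ^ (1 / p)) ^ 2 * h ^ ((p - 2) / p) :=
        Real.mul_rpow_mul_rpow_eq_sq_mul_rpow hp (by positivity) h0.le
    _ = 4 * I ^ (2 / p) * h ^ ((p - 2) / p) := by
        rw [mul_pow, ← Real.rpow_natCast (I ^ _), ← Real.rpow_mul hI, Nat.cast_ofNat,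
          one_div_mul_eq_div]
        norm_num
end

section
/- Let f ∈ L²(0,1) be such that for all real numbers u, r, u', r' with 0 < u < u + r < u' < u' + r' < 1 one has (1/r)∫_u^{u+r} f(v) dv ≤ (1/r')∫_{u'}^{u'+r'} f(v) dv. Then there exists a non-decreasing, right-continuous function F : (0,1) → ℝ such that f(u) = F(u) for almost every u ∈ (0,1). -/
/-!
Let `F u` be the infimum of the means of `f` over intervals `[a, a + s] ⊆ (u, 1)`. The
hypothesis bounds it below, and as `u` grows the admissible intervals only shrink, so `F` is
non-decreasing; since each admissible interval stays admissible for all points slightly to the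
right of `u`, `F` is right-continuous. At a Lebesgue point `u` of `f`, the means over
`[u + r, u + 2r]` are `≥ F u` and those over `[u - 2r, u - r]` are `≤ F u` (by the hypothesis),
and both tend to `f u` as `r → 0⁺`, which forces `f u = F u`.
-/

open MeasureTheory Set Filter Topology

theorem monotoneOn_sInf_biUnion_Ioi (T : ℝ → Set ℝ) {s : Set ℝ}
    (hne : ∀ u ∈ s, (⋃ a ∈ Ioi u, T a).Nonempty) (hbdd : ∀ u ∈ s, BddBelow (⋃ a ∈ Ioi u, T a)) :
    MonotoneOn (fun x => sInf (⋃ a ∈ Ioi x, T a)) s := fun _ hu _ hv huv =>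
  csInf_le_csInf (hbdd _ hu) (hne _ hv) (biUnion_subset_biUnion_left (Ioi_subset_Ioi huv))

theorem continuousWithinAt_Ici_sInf_biUnion_Ioi (T : ℝ → Set ℝ) {u : ℝ}
    (hne : (⋃ a ∈ Ioi u, T a).Nonempty) (hbdd : BddBelow (⋃ a ∈ Ioi u, T a)) :
    ContinuousWithinAt (fun x => sInf (⋃ a ∈ Ioi x, T a)) (Ici u) u := by
  have mem_of_lt : ∀ {x a y}, x < a → y ∈ T a → y ∈ ⋃ a ∈ Ioi x, T a :=
    fun hxa hy => mem_biUnion hxa hy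
  have subset_of_le : ∀ {x}, u ≤ x → ⋃ a ∈ Ioi x, T a ⊆ ⋃ a ∈ Ioi u, T a :=
    fun hx => biUnion_subset_biUnion_left (Ioi_subset_Ioi hx)
  have eventually_lt : ∀ {a}, u < a → ∀ᶠ x in 𝓝[≥] u, u ≤ x ∧ x < a := fun ha =>
    Filter.Eventually.and self_mem_nhdsWithin
      ((eventually_lt_nhds ha).filter_mono nhdsWithin_le_nhds)
  obtain ⟨y₀, hy₀⟩ := hne
  obtain ⟨a₀, ha₀, hy₀⟩ := mem_iUnion₂.1 hy₀
  refine tendsto_order.2 ⟨fun b hb => ?_, fun b hb => ?_⟩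
  · filter_upwards [eventually_lt ha₀] with x ⟨hux, hxa⟩
    exact hb.trans_le (csInf_le_csInf hbdd ⟨y₀, mem_of_lt hxa hy₀⟩ (subset_of_le hux))
  · obtain ⟨y, hy, hyb⟩ := exists_lt_of_csInf_lt ⟨y₀, mem_biUnion ha₀ hy₀⟩ hb
    obtain ⟨a, ha, hy⟩ := mem_iUnion₂.1 hy
    filter_upwards [eventually_lt ha] with x ⟨hux, hxa⟩
    exact (csInf_le (hbdd.mono (subset_of_le hux)) (mem_of_lt hxa hy)).trans_lt hyb

theorem setAverage_Icc_eq (f : ℝ → ℝ) {a b : ℝ} (hab : a ≤ b) :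
    ⨍ x in Icc a b, f x = (b - a)⁻¹ * ∫ x in a..b, f x := by
  rw [setAverage_eq, measureReal_def, Real.volume_Icc, ENNReal.toReal_ofReal (sub_nonneg.2 hab),
    integral_Icc_eq_integral_Ioc, intervalIntegral.integral_of_le hab, smul_eq_mul]

noncomputable def intervalMean (f : ℝ → ℝ) (a s : ℝ) : ℝ := (1 / s) * ∫ v in a..(a + s), f v

/-- `[x + c r, x + (c + 1) r]` is the ball of radius `r / 2` about a point at distance
`|c + 1/2| r` from `x`, so Lebesgue's theorem for balls with moving centres applies. -/
theorem ae_tendsto_intervalMean_shift {f : ℝ → ℝ} (hf : LocallyIntegrable f) (c : ℝ) :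
    ∀ᵐ x, Tendsto (fun r => intervalMean f (x + c * r) r) (𝓝[>] 0) (𝓝 (f x)) := by
  filter_upwards [IsUnifLocDoublingMeasure.ae_tendsto_average volume hf (2 * |c| + 1)] with x hx
  have hδ : Tendsto (fun r : ℝ => r / 2) (𝓝[>] 0) (𝓝[>] 0) :=
    tendsto_nhdsWithin_of_tendsto_nhds_of_eventually_within _
      (((continuous_id.div_const 2).tendsto' 0 0 (zero_div 2)).mono_left nhdsWithin_le_nhds)
      (by filter_upwards [self_mem_nhdsWithin] with r (hr : 0 < r) using half_pos hr)
  refine (hx (fun r => x + c * r + r / 2) (fun r => r / 2) hδ ?_).congr' ?_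
  · filter_upwards [self_mem_nhdsWithin] with r (hr : 0 < r)
    rw [Metric.mem_closedBall, Real.dist_eq,
      show x - (x + c * r + r / 2) = -((c + 1 / 2) * r) by ring, abs_neg, abs_mul,
      abs_of_pos hr]
    nlinarith [abs_add_le c (1 / 2), abs_nonneg c]
  · filter_upwards [self_mem_nhdsWithin] with r (hr : 0 < r)
    rw [Real.closedBall_eq_Icc, setAverage_Icc_eq _ (by linarith), intervalMean, one_div]
    congr 2 <;> ring

theorem ae_restrict_tendsto_intervalMean_shift {f : ℝ → ℝ} {U : Set ℝ} (hU : IsOpen U)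
    (hf : IntegrableOn f U) (c : ℝ) :
    ∀ᵐ x ∂volume.restrict U,
      Tendsto (fun r => intervalMean f (x + c * r) r) (𝓝[>] 0) (𝓝 (f x)) := by
  have hg : LocallyIntegrable (U.indicator f) :=
    ((integrable_indicator_iff hU.measurableSet).2 hf).locallyIntegrable
  filter_upwards [ae_restrict_mem hU.measurableSet,
    ae_restrict_of_ae (ae_tendsto_intervalMean_shift hg c)] with x hxU hx
  rw [indicator_of_mem hxU] at hx
  refine hx.congr' ?_
  obtain ⟨ε, hε, hball⟩ := Metric.isOpen_iff.1 hU x hxU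
  have hc : 0 < |c| + 1 := by positivity
  filter_upwards [Ioo_mem_nhdsGT (div_pos hε hc)] with r ⟨hr, hrε⟩
  have hsub : Icc (x + c * r) (x + c * r + r) ⊆ U := fun v hv => hball <| by
    rw [Metric.mem_ball, Real.dist_eq, abs_lt]
    rw [lt_div_iff₀ hc] at hrε
    constructor <;> nlinarith [hv.1, hv.2, neg_abs_le c, le_abs_self c]
  unfold intervalMean
  congr 1
  refine intervalIntegral.integral_congr fun v hv => indicator_of_mem (hsub ?_) f
  rwa [uIcc_of_le (by linarith)] at hv

def HasMonotoneIntervalMeans (f : ℝ → ℝ) : Prop :=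
  ∀ u r u' r' : ℝ, 0 < u → u < u + r → u + r < u' → u' < u' + r' → u' + r' < 1 →
    intervalMean f u r ≤ intervalMean f u' r'

def meansRightOf (f : ℝ → ℝ) (u : ℝ) : Set ℝ := ⋃ a ∈ Ioi u, intervalMean f a '' Ioo 0 (1 - a)

section MeansRightOf

variable {f : ℝ → ℝ}

theorem intervalMean_mem_meansRightOf {u a s : ℝ} (hua : u < a) (hs : 0 < s)
    (has : a + s < 1) : intervalMean f a s ∈ meansRightOf f u :=
  mem_biUnion hua ⟨s, ⟨hs, by linarith⟩, rfl⟩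

theorem meansRightOf_nonempty {u : ℝ} (hu : u < 1) : (meansRightOf f u).Nonempty :=
  ⟨_, intervalMean_mem_meansRightOf (a := (u + 1) / 2) (s := (1 - u) / 4)
    (by linarith) (by linarith) (by linarith)⟩

theorem intervalMean_mem_lowerBounds_meansRightOf (hmono : HasMonotoneIntervalMeans f)
    {b t u : ℝ} (hb : 0 < b) (ht : 0 < t) (hbt : b + t < u) :
    intervalMean f b t ∈ lowerBounds (meansRightOf f u) := by
  intro y hy
  obtain ⟨a, hua, s, ⟨hs, has⟩, rfl⟩ : ∃ a, u < a ∧ ∃ s, (0 < s ∧ s < 1 - a) ∧ _ := by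
    simpa [meansRightOf] using hy
  exact hmono b t a s hb (by linarith) (by linarith) (by linarith) (by linarith)

theorem bddBelow_meansRightOf (hmono : HasMonotoneIntervalMeans f) {u : ℝ} (hu : 0 < u) :
    BddBelow (meansRightOf f u) :=
  ⟨_, intervalMean_mem_lowerBounds_meansRightOf hmono (b := u / 2) (t := u / 4)
    (by linarith) (by linarith) (by linarith)⟩

theorem sInf_meansRightOf_le_of_tendsto (hmono : HasMonotoneIntervalMeans f) {x y : ℝ}
    (hx : x ∈ Ioo 0 1) (h : Tendsto (fun r => intervalMean f (x + 1 * r) r) (𝓝[>] 0) (𝓝 y)) :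
    sInf (meansRightOf f x) ≤ y := by
  refine ge_of_tendsto h ?_
  filter_upwards [Ioo_mem_nhdsGT (show 0 < (1 - x) / 2 by linarith [hx.2])] with r ⟨hr, hrx⟩
  exact csInf_le (bddBelow_meansRightOf hmono hx.1)
    (intervalMean_mem_meansRightOf (by linarith) hr (by linarith))

theorem le_sInf_meansRightOf_of_tendsto (hmono : HasMonotoneIntervalMeans f) {x y : ℝ}
    (hx : x ∈ Ioo 0 1) (h : Tendsto (fun r => intervalMean f (x + -2 * r) r) (𝓝[>] 0) (𝓝 y)) :
    y ≤ sInf (meansRightOf f x) := by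
  refine le_of_tendsto h ?_
  filter_upwards [Ioo_mem_nhdsGT (show 0 < x / 2 by linarith [hx.1])] with r ⟨hr, hrx⟩
  exact le_csInf (meansRightOf_nonempty hx.2)
    (intervalMean_mem_lowerBounds_meansRightOf hmono (by linarith) hr (by linarith))

end MeansRightOf

/-- Let `f ∈ L²(0,1)` be such that for all `0 < u < u+r < u' < u'+r' < 1`
one has `(1/r)∫_u^{u+r} f ≤ (1/r')∫_{u'}^{u'+r'} f`. Then there exists a non-decreasing,
right-continuous function `F : (0,1) → ℝ` with `f = F` almost everywhere on `(0,1)`. -/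
theorem stmt2 (f : ℝ → ℝ)
    (hf : MemLp f 2 (volume.restrict (Set.Ioo (0:ℝ) 1)))
    (hmono : ∀ u r u' r' : ℝ,
      0 < u → u < u + r → u + r < u' → u' < u' + r' → u' + r' < 1 →
      (1/r) * ∫ v in u..(u + r), f v ≤ (1/r') * ∫ v in u'..(u' + r'), f v) :
    ∃ F : ℝ → ℝ, MonotoneOn F (Set.Ioo 0 1) ∧
      (∀ u ∈ Set.Ioo (0:ℝ) 1, ContinuousWithinAt F (Set.Ici u) u) ∧
      ∀ᵐ u ∂(volume.restrict (Set.Ioo (0:ℝ) 1)), f u = F u := by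
  have hInt : IntegrableOn f (Ioo 0 1) := hf.integrable one_le_two
  refine ⟨fun u => sInf (meansRightOf f u), ?_, ?_, ?_⟩
  · exact monotoneOn_sInf_biUnion_Ioi _ (fun u hu => meansRightOf_nonempty hu.2)
      (fun u hu => bddBelow_meansRightOf hmono hu.1)
  · exact fun u hu => continuousWithinAt_Ici_sInf_biUnion_Ioi _ (meansRightOf_nonempty hu.2)
      (bddBelow_meansRightOf hmono hu.1)
  · filter_upwards [ae_restrict_mem measurableSet_Ioo,
      ae_restrict_tendsto_intervalMean_shift isOpen_Ioo hInt 1,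
      ae_restrict_tendsto_intervalMean_shift isOpen_Ioo hInt (-2)] with x hx hright hleft
    exact le_antisymm (le_sInf_meansRightOf_of_tendsto hmono hx hleft)
      (sInf_meansRightOf_le_of_tendsto hmono hx hright)
end

section
/- Let T > 0. Let (σ_n)_{n≥1} be positive real numbers with σ_n → 0, and for each n let φ_n : ℝ → [0,1] be Borel measurable with φ_n(x) = 0 whenever |x| ≥ σ_n/2. Let y_n, y : [0,1] × [0,T] → ℝ be such that v ↦ y_n(v,t) and v ↦ y(v,t) are Lebesgue measurable for every t ∈ [0,T], and suppose there is a Borel set A ⊆ [0,1] of Lebesgue measure 1 such that for every v ∈ A, sup_{t∈[0,T]} |y_n(v,t) − y(v,t)| → 0 as n → ∞. Then for every u ∈ A and every t ∈ [0,T], limsup_{n→∞} ∫₀¹ φ_n(y_n(u,t) − y_n(v,t))² dv ≤ Leb{v ∈ [0,1] : y(v,t) = y(u,t)}. -/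
/-!
Fix `u` and `t` and let `S = {v | y(v,t) = y(u,t)}`. For `v ∈ A \ S` the differences
`y_n(u,t) - y_n(v,t)` converge to `y(u,t) - y(v,t) ≠ 0` while the supports of `φ_n` shrink to
`{0}`, so the integrand vanishes eventually; as `A` has full measure, dominated convergence
makes the integral over `[0,1] \ S` tend to `0`. On `S` the integrand is at most `1`.
-/

open MeasureTheory Filter Topology Set

theorem limsup_integral_le_measureReal_of_tendsto_zero_off {α : Type*} [MeasurableSpace α]
    {μ : Measure α} [IsFiniteMeasure μ] {f : ℕ → α → ℝ} {s : Set α} (hs : MeasurableSet s)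
    (hf : ∀ n, AEStronglyMeasurable (f n) μ) (hf1 : ∀ n, ∀ᵐ x ∂μ, ‖f n x‖ ≤ 1)
    (hlim : ∀ᵐ x ∂μ, x ∉ s → Tendsto (fun n => f n x) atTop (𝓝 0)) :
    limsup (fun n => ∫ x, f n x ∂μ) atTop ≤ μ.real s := by
  have hoff : Tendsto (fun n => ∫ x in sᶜ, f n x ∂μ) atTop (𝓝 0) := by
    simpa using tendsto_integral_of_dominated_convergence (fun _ => (1 : ℝ))
      (fun n => (hf n).restrict) (integrable_const 1) (fun n => ae_restrict_of_ae (hf1 n))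
      ((ae_restrict_iff' hs.compl).2 hlim)
  have hon : ∀ n, ∫ x in s, f n x ∂μ ≤ μ.real s := fun n => by
    simpa using (le_abs_self _).trans (norm_setIntegral_le_of_norm_le_const_ae
      (measure_lt_top μ s) (ae_restrict_of_ae (hf1 n)))
  have hbelow : ∀ n, -μ.real univ ≤ ∫ x, f n x ∂μ := fun n =>
    neg_le_of_abs_le (by simpa using norm_integral_le_of_norm_le_const (hf1 n))
  calc limsup (fun n => ∫ x, f n x ∂μ) atTop
      ≤ limsup (fun n => μ.real s + ∫ x in sᶜ, f n x ∂μ) atTop := by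
        refine limsup_le_limsup (Eventually.of_forall fun n => ?_)
          (isCoboundedUnder_le_of_le atTop hbelow)
          (tendsto_const_nhds.add hoff).isBoundedUnder_le
        dsimp only
        rw [← integral_add_compl hs (.of_bound (hf n) 1 (hf1 n))]
        exact add_le_add_left (hon n) _
    _ = μ.real s := by simpa using (tendsto_const_nhds.add hoff).limsup_eq

theorem eventually_apply_eq_zero_of_tendsto {ι : Type*} {l : Filter ι} {σ : ι → ℝ}
    (hσ : Tendsto σ l (𝓝 0)) {φ : ι → ℝ → ℝ} (hφ0 : ∀ i x, σ i / 2 ≤ |x| → φ i x = 0)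
    {x : ι → ℝ} {a : ℝ} (hx : Tendsto x l (𝓝 a)) (ha : a ≠ 0) :
    ∀ᶠ i in l, φ i (x i) = 0 := by
  have hgap : Tendsto (fun i => |x i| - σ i / 2) l (𝓝 |a|) := by
    simpa using hx.abs.sub (hσ.div_const 2)
  filter_upwards [hgap.eventually (eventually_gt_nhds (abs_pos.2 ha))] with i hi
  exact hφ0 i _ (by linarith)

theorem ae_restrict_mem_of_subset_of_measure_ge {α : Type*} [MeasurableSpace α]
    {μ : Measure α} {s t : Set α} (hst : s ⊆ t) (hts : μ t ≤ μ s) (hs : MeasurableSet s)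
    (ht : μ t ≠ ⊤) : ∀ᵐ x ∂μ.restrict t, x ∈ s := by
  rw [← Measure.restrict_congr_set (ae_eq_of_subset_of_measure_ge hst hts hs.nullMeasurableSet ht)]
  exact ae_restrict_mem hs

theorem stmt9_general (T : ℝ)
    (σ : ℕ → ℝ)
    (hσ : Filter.Tendsto σ Filter.atTop (nhds 0))
    (φ : ℕ → ℝ → ℝ) (hφm : ∀ n, Measurable (φ n))
    (hφ01 : ∀ n x, φ n x ∈ Set.Icc (0:ℝ) 1)
    (hφ0 : ∀ n x, σ n / 2 ≤ |x| → φ n x = 0)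
    (yn : ℕ → ℝ → ℝ → ℝ) (y : ℝ → ℝ → ℝ)
    (hynm : ∀ n, ∀ t ∈ Set.Icc (0:ℝ) T, Measurable fun v => yn n v t)
    (hym : ∀ t ∈ Set.Icc (0:ℝ) T, Measurable fun v => y v t)
    (A : Set ℝ) (hAmeas : MeasurableSet A) (hAsub : A ⊆ Set.Icc 0 1)
    (hAvol : volume A = 1)
    (hconv : ∀ v ∈ A,
      TendstoUniformlyOn (fun n t => yn n v t) (y v) Filter.atTop (Set.Icc 0 T)) :
    ∀ u ∈ A, ∀ t ∈ Set.Icc (0:ℝ) T,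
      Filter.limsup
          (fun n => ∫ v in Set.Icc (0:ℝ) 1, (φ n (yn n u t - yn n v t)) ^ 2)
          Filter.atTop
        ≤ (volume {v ∈ Set.Icc (0:ℝ) 1 | y v t = y u t}).toReal := by
  intro u hu t ht
  set f : ℕ → ℝ → ℝ := fun n v => φ n (yn n u t - yn n v t) ^ 2
  have hA : ∀ᵐ v ∂volume.restrict (Icc (0:ℝ) 1), v ∈ A :=
    ae_restrict_mem_of_subset_of_measure_ge hAsub (by simp [hAvol]) hAmeas (by simp)
  have hlevel : MeasurableSet {v | y v t = y u t} := hym t ht (measurableSet_singleton _)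
  have hfm : ∀ n, Measurable (f n) := fun n =>
    ((hφm n).comp (measurable_const.sub (hynm n t ht))).pow_const 2
  have hf1 : ∀ n v, ‖f n v‖ ≤ 1 := fun n v => by
    obtain ⟨h0, h1⟩ := hφ01 n (yn n u t - yn n v t)
    simpa [f, abs_of_nonneg h0] using pow_le_one₀ (n := 2) h0 h1
  have hlim : ∀ v ∈ A, v ∉ {v | y v t = y u t} → Tendsto (f · v) atTop (𝓝 0) := by
    intro v hv hne
    refine tendsto_const_nhds.congr' ?_
    filter_upwards [eventually_apply_eq_zero_of_tendsto hσ hφ0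
      (((hconv u hu).tendsto_at ht).sub ((hconv v hv).tendsto_at ht))
      (sub_ne_zero.2 (Ne.symm hne))] with n hn
    simp [f, hn]
  have key := limsup_integral_le_measureReal_of_tendsto_zero_off hlevel
    (fun n => (hfm n).aestronglyMeasurable) (fun n => ae_of_all _ (hf1 n))
    (by filter_upwards [hA] using hlim)
  rw [measureReal_restrict_apply' measurableSet_Icc, inter_comm] at key
  exact key

/-- Let `σ_n → 0` with `σ_n > 0`, `φ_n : ℝ → [0,1]` Borel with
`φ_n(x) = 0` whenever `|x| ≥ σ_n/2`. Let `y_n, y : [0,1] × [0,T] → ℝ` be measurable in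
the space variable, and let `A ⊆ [0,1]` be Borel of measure 1 such that for every
`v ∈ A`, `sup_{t∈[0,T]} |y_n(v,t) − y(v,t)| → 0`. Then for every `u ∈ A` and `t ∈ [0,T]`,
`limsup_n ∫₀¹ φ_n(y_n(u,t) − y_n(v,t))² dv ≤ Leb{v ∈ [0,1] : y(v,t) = y(u,t)}`. -/
theorem stmt9 (T : ℝ) (hT : 0 < T)
    (σ : ℕ → ℝ) (hσpos : ∀ n, 0 < σ n)
    (hσ : Filter.Tendsto σ Filter.atTop (nhds 0))
    (φ : ℕ → ℝ → ℝ) (hφm : ∀ n, Measurable (φ n))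
    (hφ01 : ∀ n x, φ n x ∈ Set.Icc (0:ℝ) 1)
    (hφ0 : ∀ n x, σ n / 2 ≤ |x| → φ n x = 0)
    (yn : ℕ → ℝ → ℝ → ℝ) (y : ℝ → ℝ → ℝ)
    (hynm : ∀ n, ∀ t ∈ Set.Icc (0:ℝ) T, Measurable fun v => yn n v t)
    (hym : ∀ t ∈ Set.Icc (0:ℝ) T, Measurable fun v => y v t)
    (A : Set ℝ) (hAmeas : MeasurableSet A) (hAsub : A ⊆ Set.Icc 0 1)
    (hAvol : volume A = 1)
    (hconv : ∀ v ∈ A,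
      TendstoUniformlyOn (fun n t => yn n v t) (y v) Filter.atTop (Set.Icc 0 T)) :
    ∀ u ∈ A, ∀ t ∈ Set.Icc (0:ℝ) T,
      Filter.limsup
          (fun n => ∫ v in Set.Icc (0:ℝ) 1, (φ n (yn n u t - yn n v t)) ^ 2)
          Filter.atTop
        ≤ (volume {v ∈ Set.Icc (0:ℝ) 1 | y v t = y u t}).toReal :=
  stmt9_general T σ hσ φ hφm hφ01 hφ0 yn y hynm hym A hAmeas hAsub hAvol hconv
end

section
/- Let f : [0,1] → ℝ be non-decreasing, let 0 ≤ a ≤ b ≤ 1 and δ > 0 with f(b) − f(a) ≤ δ, and let φ : ℝ → [0,1] be Borel measurable with φ(x) = 1 whenever |x| ≤ δ/2. Then ∫₀¹ φ(f(a) − f(v))² dv + ∫₀¹ φ(f(b) − f(v))² dv ≥ b − a. -/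
open MeasureTheory

/-- Let `f : [0,1] → ℝ` be non-decreasing, `0 ≤ a ≤ b ≤ 1`, `δ > 0`
with `f(b) − f(a) ≤ δ`, and `φ : ℝ → [0,1]` Borel with `φ(x) = 1` whenever `|x| ≤ δ/2`.
Then `∫₀¹ φ(f(a) − f(v))² dv + ∫₀¹ φ(f(b) − f(v))² dv ≥ b − a`. -/
theorem stmt10 (f : ℝ → ℝ) (hf : MonotoneOn f (Set.Icc 0 1))
    (a b δ : ℝ) (ha : 0 ≤ a) (hab : a ≤ b) (hb : b ≤ 1) (hδ : 0 < δ)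
    (hfab : f b - f a ≤ δ)
    (φ : ℝ → ℝ) (hφm : Measurable φ)
    (hφ01 : ∀ x, φ x ∈ Set.Icc (0:ℝ) 1)
    (hφ1 : ∀ x, |x| ≤ δ / 2 → φ x = 1) :
    b - a ≤ (∫ v in Set.Ioo (0:ℝ) 1, (φ (f a - f v)) ^ 2) +
      ∫ v in Set.Ioo (0:ℝ) 1, (φ (f b - f v)) ^ 2 := by
  have hsub : Set.Ioo a b ⊆ Set.Ioo (0:ℝ) 1 := fun v hv =>
    ⟨lt_of_le_of_lt ha hv.1, lt_of_lt_of_le hv.2 hb⟩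
  have hfmeas : AEMeasurable f (volume.restrict (Set.Ioo (0:ℝ) 1)) := by
    have := aemeasurable_restrict_of_monotoneOn (μ := volume) (measurableSet_Icc (a := (0:ℝ)) (b := 1)) hf
    exact this.mono_measure (Measure.restrict_mono Set.Ioo_subset_Icc_self le_rfl)
  -- measurability / integrability of the two integrands
  have key : ∀ c : ℝ, IntegrableOn (fun v => (φ (c - f v)) ^ 2) (Set.Ioo (0:ℝ) 1) := by
    intro c
    have hm : AEMeasurable (fun v => (φ (c - f v)) ^ 2)
        (volume.restrict (Set.Ioo (0:ℝ) 1)) := by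
      exact ((hφm.comp_aemeasurable (aemeasurable_const.sub hfmeas)).pow_const 2)
    refine Integrable.mono' (integrable_const 1) hm.aestronglyMeasurable ?_
    filter_upwards with v
    have h0 := (hφ01 (c - f v)).1
    have h1 := (hφ01 (c - f v)).2
    rw [Real.norm_eq_abs, abs_of_nonneg (by positivity)]
    nlinarith
  have ka := key (f a)
  have kb := key (f b)
  have hnonneg : ∀ v, 0 ≤ (φ (f a - f v)) ^ 2 + (φ (f b - f v)) ^ 2 := by
    intro v; positivity
  have hpt : ∀ v ∈ Set.Ioo a b, (1:ℝ) ≤ (φ (f a - f v)) ^ 2 + (φ (f b - f v)) ^ 2 := by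
    intro v hv
    have hvI : v ∈ Set.Icc (0:ℝ) 1 := Set.Ioo_subset_Icc_self (hsub hv)
    have haI : a ∈ Set.Icc (0:ℝ) 1 := ⟨ha, le_trans hab hb⟩
    have hbI : b ∈ Set.Icc (0:ℝ) 1 := ⟨le_trans ha hab, hb⟩
    have h1 : f a ≤ f v := hf haI hvI hv.1.le
    have h2 : f v ≤ f b := hf hvI hbI hv.2.le
    rcases le_or_gt (f v - f a) (δ / 2) with h | h
    · have : φ (f a - f v) = 1 := hφ1 _ (by rw [abs_sub_comm, abs_of_nonneg (by linarith)]; linarith)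
      have h0 := sq_nonneg (φ (f b - f v))
      nlinarith
    · have : φ (f b - f v) = 1 := hφ1 _ (by rw [abs_of_nonneg (by linarith)]; linarith)
      have h0 := sq_nonneg (φ (f a - f v))
      nlinarith
  have step1 : b - a ≤ ∫ v in Set.Ioo a b, ((φ (f a - f v)) ^ 2 + (φ (f b - f v)) ^ 2) := by
    have h := setIntegral_mono_on (integrable_const 1)
      (IntegrableOn.mono_set (ka.add kb) hsub) measurableSet_Ioo hpt
    simpa [Real.volume_Ioo, hab, ENNReal.toReal_ofReal (sub_nonneg.mpr hab)] using h
  have step2 : (∫ v in Set.Ioo a b, ((φ (f a - f v)) ^ 2 + (φ (f b - f v)) ^ 2))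
      ≤ ∫ v in Set.Ioo (0:ℝ) 1, ((φ (f a - f v)) ^ 2 + (φ (f b - f v)) ^ 2) := by
    apply setIntegral_mono_set (ka.add kb)
    · filter_upwards with v using hnonneg v
    · exact Filter.Eventually.of_forall hsub
  have hsum : (∫ v in Set.Ioo (0:ℝ) 1, ((φ (f a - f v)) ^ 2 + (φ (f b - f v)) ^ 2))
      = (∫ v in Set.Ioo (0:ℝ) 1, (φ (f a - f v)) ^ 2)
        + ∫ v in Set.Ioo (0:ℝ) 1, (φ (f b - f v)) ^ 2 :=
    integral_add ka kb
  linarith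
end

section
/- Let p > 2 and let g : [0,1] → ℝ be non-decreasing and right-continuous with ∫₀¹ |g(u)|^p du < ∞. For n ≥ 1 and u ∈ (0,1) set uₙ(u) = min((⌊nu⌋ + 1)/n, 1). Then ∫₀¹ (g(uₙ(u)) − g(u))² du → 0 as n → ∞. -/
/-!
A function that is monotone on `[0,1]` is bounded there by `g 0` and `g 1`, so the integrands
are dominated by the constant `(g 1 - g 0)²`. Since `uₙ(u)` tends to `u` from the right,
right-continuity gives pointwise convergence to `0`, and dominated convergence concludes.
-/

open MeasureTheory Filter Set Topology

/-- The `uₙ(u)` of the statement: the first point of the grid `n⁻¹ ℤ` strictly above `u`, capped at `1`. -/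
noncomputable def nextGridPoint (n : ℕ) (u : ℝ) : ℝ :=
  min (((⌊(n : ℝ) * u⌋ : ℝ) + 1) / n) 1

lemma nextGridPoint_monotone (n : ℕ) : Monotone (nextGridPoint n) := fun a b hab => by
  have hfloor : (⌊(n : ℝ) * a⌋ : ℝ) ≤ ⌊(n : ℝ) * b⌋ := by
    exact_mod_cast Int.floor_le_floor (mul_le_mul_of_nonneg_left hab n.cast_nonneg)
  unfold nextGridPoint
  gcongr

lemma nextGridPoint_mem_Icc (n : ℕ) {u : ℝ} (hu : 0 ≤ u) : nextGridPoint n u ∈ Icc (0 : ℝ) 1 := by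
  have hfloor : (0 : ℝ) ≤ ⌊(n : ℝ) * u⌋ := by
    exact_mod_cast Int.floor_nonneg.mpr (mul_nonneg n.cast_nonneg hu)
  exact ⟨le_min (by positivity) zero_le_one, min_le_right _ _⟩

lemma le_nextGridPoint {n : ℕ} (hn : n ≠ 0) {u : ℝ} (hu : u ≤ 1) : u ≤ nextGridPoint n u := by
  have hnpos : (0 : ℝ) < n := by positivity
  refine le_min ?_ hu
  rw [le_div_iff₀ hnpos]
  nlinarith [Int.lt_floor_add_one ((n : ℝ) * u)]

lemma nextGridPoint_le {n : ℕ} (hn : n ≠ 0) (u : ℝ) : nextGridPoint n u ≤ u + 1 / n := by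
  have hnpos : (0 : ℝ) < n := by positivity
  refine (min_le_left _ _).trans ?_
  rw [div_le_iff₀ hnpos, add_mul, one_div_mul_cancel hnpos.ne']
  linarith [Int.floor_le ((n : ℝ) * u)]

lemma tendsto_nextGridPoint {u : ℝ} (hu : u ≤ 1) :
    Tendsto (fun n => nextGridPoint n u) atTop (𝓝[≥] u) := by
  have hge : ∀ᶠ n : ℕ in atTop, u ≤ nextGridPoint n u := by
    filter_upwards [eventually_ne_atTop 0] with n hn using le_nextGridPoint hn hu
  have hle : ∀ᶠ n : ℕ in atTop, nextGridPoint n u ≤ u + 1 / n := by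
    filter_upwards [eventually_ne_atTop 0] with n hn using nextGridPoint_le hn u
  have hupper : Tendsto (fun n : ℕ => u + 1 / (n : ℝ)) atTop (𝓝 u) := by
    simpa using (tendsto_one_div_atTop_nhds_zero_nat (𝕜 := ℝ)).const_add u
  exact tendsto_nhdsWithin_iff.mpr
    ⟨tendsto_of_tendsto_of_tendsto_of_le_of_le' tendsto_const_nhds hupper hge hle, hge⟩

lemma MonotoneOn.abs_sub_le_of_mem_Icc {α : Type*} [Preorder α] {g : α → ℝ} {a b x y : α}
    (hg : MonotoneOn g (Icc a b)) (hx : x ∈ Icc a b) (hy : y ∈ Icc a b) :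
    |g x - g y| ≤ g b - g a := by
  have hab : a ≤ b := hx.1.trans hx.2
  have hax := hg (left_mem_Icc.mpr hab) hx hx.1
  have hxb := hg hx (right_mem_Icc.mpr hab) hx.2
  have hay := hg (left_mem_Icc.mpr hab) hy hy.1
  have hyb := hg hy (right_mem_Icc.mpr hab) hy.2
  rw [abs_le]
  constructor <;> linarith

theorem stmt13_general (g : ℝ → ℝ)
    (hmono : MonotoneOn g (Set.Icc 0 1))
    (hrc : ∀ u ∈ Set.Ico (0:ℝ) 1, ContinuousWithinAt g (Set.Ici u) u) :
    Filter.Tendsto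
      (fun n : ℕ => ∫ u in Set.Ioo (0:ℝ) 1,
        (g (min (((⌊(n : ℝ) * u⌋ : ℝ) + 1) / (n : ℝ)) 1) - g u) ^ 2)
      Filter.atTop (nhds 0) := by
  have hmaps (n : ℕ) : MapsTo (nextGridPoint n) (Ioo 0 1) (Icc 0 1) :=
    fun u hu => nextGridPoint_mem_Icc n hu.1.le
  have hmeas (n : ℕ) : AEStronglyMeasurable (fun u => (g (nextGridPoint n u) - g u) ^ 2)
      (volume.restrict (Ioo 0 1)) :=
    (((aemeasurable_restrict_of_monotoneOn measurableSet_Ioo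
      (hmono.comp ((nextGridPoint_monotone n).monotoneOn _) (hmaps n))).sub
      (aemeasurable_restrict_of_monotoneOn measurableSet_Ioo
        (hmono.mono Ioo_subset_Icc_self))).pow_const 2).aestronglyMeasurable
  have hbound (n : ℕ) : ∀ᵐ u ∂volume.restrict (Ioo (0 : ℝ) 1),
      ‖(g (nextGridPoint n u) - g u) ^ 2‖ ≤ (g 1 - g 0) ^ 2 := by
    refine ae_restrict_of_forall_mem measurableSet_Ioo fun u hu => ?_
    rw [norm_pow, Real.norm_eq_abs]
    exact pow_le_pow_left₀ (abs_nonneg _)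
      (hmono.abs_sub_le_of_mem_Icc (hmaps n hu) (Ioo_subset_Icc_self hu)) 2
  have hlim : ∀ᵐ u ∂volume.restrict (Ioo (0 : ℝ) 1),
      Tendsto (fun n => (g (nextGridPoint n u) - g u) ^ 2) atTop (𝓝 0) := by
    refine ae_restrict_of_forall_mem measurableSet_Ioo fun u hu => ?_
    have hg := (hrc u ⟨hu.1.le, hu.2⟩).tendsto.comp (tendsto_nextGridPoint hu.2.le)
    simpa using (hg.sub_const (g u)).pow 2
  simpa [nextGridPoint] using tendsto_integral_of_dominated_convergence _ hmeas
    (integrableOn_const measure_Ioo_lt_top.ne) hbound hlim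

/-- Let `p > 2` and let `g : [0,1] → ℝ` be non-decreasing and
right-continuous with `∫₀¹ |g(u)|^p du < ∞`. With `uₙ(u) = min((⌊nu⌋ + 1)/n, 1)`,
`∫₀¹ (g(uₙ(u)) − g(u))² du → 0` as `n → ∞`. -/
theorem stmt13 (p : ℝ) (hp : 2 < p) (g : ℝ → ℝ)
    (hmono : MonotoneOn g (Set.Icc 0 1))
    (hrc : ∀ u ∈ Set.Ico (0:ℝ) 1, ContinuousWithinAt g (Set.Ici u) u)
    (hint : IntegrableOn (fun u => |g u| ^ p) (Set.Ioo 0 1)) :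
    Filter.Tendsto
      (fun n : ℕ => ∫ u in Set.Ioo (0:ℝ) 1,
        (g (min (((⌊(n : ℝ) * u⌋ : ℝ) + 1) / (n : ℝ)) 1) - g u) ^ 2)
      Filter.atTop (nhds 0) :=
  stmt13_general g hmono hrc
end
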